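/- For every T ≥ 1 and every x ∈ [−2π/3, 2π/3], one has exp(−x²T²/2) ≤ φ_p(x) ≤ 1.01·exp(−x²T²/2). -/
import Mathlib


open Real Set

noncomputable section

/-- The (unnormalized) `2π`-periodization of the Gaussian `x ↦ exp(-x²T²/2)`. -/
def periodicGaussSum (T x : ℝ) : ℝ :=
  ∑' j : ℤ, Real.exp (-((x + 2 * π * j) ^ 2 * T ^ 2) / 2)

/-- The normalizing constant `W = (Σ_{j∈ℤ} exp(-2π²j²T²))⁻¹`, so that `φ_p(0) = 1`. -/
def Wconst (T : ℝ) : ℝ := (∑' j : ℤ, Real.exp (-(2 * π ^ 2 * j ^ 2 * T ^ 2)))⁻¹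

/-- The periodic Gaussian `φ_p(x) = W·Σ_{j∈ℤ} exp(-(x+2πj)²T²/2)`. -/
def phip (T x : ℝ) : ℝ := Wconst T * periodicGaussSum T x

def Fg (T y : ℝ) (j : ℤ) : ℝ := Real.exp (-((y + 2 * π * j) ^ 2 * T ^ 2) / 2)

lemma Fg_pos (T y : ℝ) (j : ℤ) : 0 < Fg T y j := Real.exp_pos _

lemma Fg_nat_le (T : ℝ) (hT : 1 ≤ T) (y : ℝ) (hy : |y| ≤ 2 * π / 3) (n : ℕ) :
    Fg T y n ≤ Real.exp (-(y ^ 2 * T ^ 2) / 2) * Real.exp (-(2 * π ^ 2 / 3)) ^ n := by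
  rw [abs_le] at hy
  have hT2 : 1 ≤ T ^ 2 := by nlinarith
  rw [Fg, ← Real.exp_nat_mul, ← Real.exp_add, Real.exp_le_exp]
  push_cast
  have hn : (0:ℝ) ≤ (n:ℝ) := Nat.cast_nonneg n
  have hn2 : (n:ℝ) ≤ (n:ℝ) ^ 2 := by exact_mod_cast Nat.le_self_pow two_ne_zero n
  have hπ : 0 < π := Real.pi_pos
  have h1 : (-(2 * π / 3)) * (4 * π * n) ≤ y * (4 * π * n) :=
    mul_le_mul_of_nonneg_right hy.1 (by positivity)
  have hA : 0 ≤ 4 * π * n * y + 4 * π ^ 2 * (n:ℝ) ^ 2 - 4 * π ^ 2 * n / 3 := by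
    nlinarith [mul_nonneg (sq_nonneg π) (sub_nonneg.mpr hn2)]
  nlinarith [mul_nonneg (by nlinarith : (0:ℝ) ≤ T ^ 2 - 1)
    (by nlinarith : (0:ℝ) ≤ 4 * π * n * y + 4 * π ^ 2 * (n:ℝ) ^ 2)]

lemma Fg_neg_eq (T y : ℝ) (j : ℤ) : Fg T y (-j) = Fg T (-y) j := by
  unfold Fg; congr 2; push_cast; ring

lemma Fg_neg_nat_le (T : ℝ) (hT : 1 ≤ T) (y : ℝ) (hy : |y| ≤ 2 * π / 3) (n : ℕ) :
    Fg T y (-(n + 1)) ≤ Real.exp (-(y ^ 2 * T ^ 2) / 2) *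
      (Real.exp (-(2 * π ^ 2 / 3)) * Real.exp (-(2 * π ^ 2 / 3)) ^ n) := by
  have hy' : |(-y)| ≤ 2 * π / 3 := by rwa [abs_neg]
  have h := Fg_nat_le T hT (-y) hy' (n + 1)
  have he : Fg T y (-(↑n + 1)) = Fg T (-y) ((n + 1 : ℕ) : ℤ) := by
    rw [← Fg_neg_eq]; congr 1
  rw [he]
  refine h.trans (le_of_eq ?_)
  rw [neg_sq]; ring

lemma q_lt_one : Real.exp (-(2 * π ^ 2 / 3)) < 1 := by
  rw [Real.exp_lt_one_iff]; nlinarith [Real.pi_pos]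

lemma Fg_nat_summable (T : ℝ) (hT : 1 ≤ T) (y : ℝ) (hy : |y| ≤ 2 * π / 3) :
    Summable (fun n : ℕ => Fg T y n) := by
  have hgeo : Summable fun n : ℕ => Real.exp (-(2 * π ^ 2 / 3)) ^ n :=
    summable_geometric_of_lt_one (Real.exp_nonneg _) q_lt_one
  exact (hgeo.mul_left _).of_nonneg_of_le (fun n => (Fg_pos T y n).le) (Fg_nat_le T hT y hy)

lemma Fg_negnat_summable (T : ℝ) (hT : 1 ≤ T) (y : ℝ) (hy : |y| ≤ 2 * π / 3) :
    Summable (fun n : ℕ => Fg T y (-(n + 1))) := by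
  have hgeo : Summable fun n : ℕ => Real.exp (-(2 * π ^ 2 / 3)) ^ n :=
    summable_geometric_of_lt_one (Real.exp_nonneg _) q_lt_one
  exact ((hgeo.mul_left _).mul_left _).of_nonneg_of_le (fun n => (Fg_pos T y _).le)
    (by simpa [mul_assoc] using Fg_neg_nat_le T hT y hy)

lemma Fg_summable (T : ℝ) (hT : 1 ≤ T) (y : ℝ) (hy : |y| ≤ 2 * π / 3) :
    Summable (Fg T y) :=
  Summable.of_nat_of_neg_add_one (Fg_nat_summable T hT y hy) (Fg_negnat_summable T hT y hy)

set_option maxHeartbeats 2000000 in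
theorem periodicGaussian_two_sided_bound (T : ℝ) (hT : 1 ≤ T)
    (x : ℝ) (hx : x ∈ Icc (-(2 * π / 3)) (2 * π / 3)) :
    Real.exp (-(x ^ 2 * T ^ 2) / 2) ≤ phip T x ∧
      phip T x ≤ 1.01 * Real.exp (-(x ^ 2 * T ^ 2) / 2) := by
  have hπ : 0 < π := Real.pi_pos
  have hx' : |x| ≤ 2 * π / 3 := abs_le.mpr ⟨hx.1, hx.2⟩
  have h0' : |(0:ℝ)| ≤ 2 * π / 3 := by simp; positivity
  set c : ℝ := Real.exp (-(x ^ 2 * T ^ 2) / 2) with hc_def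
  set q : ℝ := Real.exp (-(2 * π ^ 2 / 3)) with hq_def
  have hc : 0 < c := Real.exp_pos _
  have hq0 : 0 ≤ q := Real.exp_nonneg _
  have hq1 : q < 1 := q_lt_one
  have hsx : Summable (Fg T x) := Fg_summable T hT x hx'
  have hs0 : Summable (Fg T 0) := Fg_summable T hT 0 h0'
  set S0 : ℝ := ∑' j : ℤ, Fg T 0 j with hS0_def
  set Sx : ℝ := ∑' j : ℤ, Fg T x j with hSx_def
  have hS0_ge1 : 1 ≤ S0 := by
    have h00 : Fg T 0 0 = 1 := by simp [Fg]
    have := Summable.le_tsum hs0 0 (fun j _ => (Fg_pos T 0 j).le)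
    rwa [h00] at this
  have hS0pos : 0 < S0 := lt_of_lt_of_le one_pos hS0_ge1
  have hW : (∑' j : ℤ, Real.exp (-(2 * π ^ 2 * j ^ 2 * T ^ 2))) = S0 := by
    refine tsum_congr fun j => ?_
    rw [Fg]; congr 1; push_cast; ring
  have hphip : phip T x = S0⁻¹ * Sx := by
    rw [phip, Wconst, hW]; rfl
  -- symmetric reindex
  have hsx_neg : Summable (fun j : ℤ => Fg T x (-j)) :=
    (Equiv.neg ℤ).summable_iff.mpr hsx
  have htneg : (∑' j : ℤ, Fg T x (-j)) = Sx := (Equiv.neg ℤ).tsum_eq (Fg T x)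
  -- Lower bound
  have key : ∀ j : ℤ, 2 * (c * Fg T 0 j) ≤ Fg T x j + Fg T x (-j) := by
    intro j
    have hprod : Fg T x j * Fg T x (-j) = (c * Fg T 0 j) ^ 2 := by
      simp only [Fg, hc_def, sq, ← Real.exp_add]
      congr 1; push_cast; ring
    nlinarith [Fg_pos T x j, Fg_pos T x (-j), mul_pos hc (Fg_pos T 0 j),
      sq_nonneg (Fg T x j - Fg T x (-j))]
  have hlow : 2 * (c * S0) ≤ 2 * Sx := by
    have h1 : ∑' j : ℤ, 2 * (c * Fg T 0 j) ≤ ∑' j : ℤ, (Fg T x j + Fg T x (-j)) :=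
      Summable.tsum_le_tsum key ((hs0.mul_left c).mul_left 2) (hsx.add hsx_neg)
    rwa [tsum_mul_left, tsum_mul_left, Summable.tsum_add hsx hsx_neg, htneg, ← two_mul] at h1
  have hlower : c ≤ phip T x := by
    rw [hphip, inv_mul_eq_div, le_div_iff₀ hS0pos]
    linarith
  -- Upper bound
  have hnat := Fg_nat_summable T hT x hx'
  have hneg := Fg_negnat_summable T hT x hx'
  have hgeo : Summable fun n : ℕ => q ^ n :=
    summable_geometric_of_lt_one hq0 hq1
  have hsplit : Sx = (∑' n : ℕ, Fg T x n) + ∑' n : ℕ, Fg T x (-(n + 1)) :=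
    tsum_of_nat_of_neg_add_one hnat hneg
  have hb1 : (∑' n : ℕ, Fg T x n) ≤ c * (1 - q)⁻¹ := by
    have := Summable.tsum_le_tsum (Fg_nat_le T hT x hx') hnat (hgeo.mul_left c)
    rwa [tsum_mul_left, tsum_geometric_of_lt_one hq0 hq1] at this
  have hb2 : (∑' n : ℕ, Fg T x (-(n + 1))) ≤ c * (q * (1 - q)⁻¹) := by
    have := Summable.tsum_le_tsum (Fg_neg_nat_le T hT x hx') hneg ((hgeo.mul_left q).mul_left c)
    rwa [tsum_mul_left, tsum_mul_left, tsum_geometric_of_lt_one hq0 hq1] at this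
  have hq300 : q ≤ 1 / 300 := by
    have h6 : q ≤ Real.exp (-6) := by
      rw [hq_def, Real.exp_le_exp]
      nlinarith [Real.pi_gt_three]
    have h300 : (300:ℝ) ≤ Real.exp 6 := by
      calc (300:ℝ) ≤ 2.7 ^ 6 := by norm_num
        _ ≤ Real.exp 1 ^ 6 := by
            have h27 : (2.7:ℝ) ≤ Real.exp 1 := by nlinarith [Real.exp_one_gt_d9]
            exact pow_le_pow_left₀ (by norm_num) h27 6
        _ = Real.exp 6 := by rw [← Real.exp_nat_mul]; norm_num
    have : Real.exp (-6) ≤ 1 / 300 := by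
      rw [Real.exp_neg]
      rw [inv_le_comm₀ (Real.exp_pos 6) (by norm_num)] at *
      · linarith
    linarith
  have hupper : phip T x ≤ 1.01 * c := by
    have hSx_nonneg : 0 ≤ Sx := tsum_nonneg fun j => (Fg_pos T x j).le
    have hstep1 : phip T x ≤ Sx := by
      rw [hphip]
      have : S0⁻¹ ≤ 1 := inv_le_one_of_one_le₀ hS0_ge1
      nlinarith
    refine hstep1.trans ?_
    rw [hsplit]
    refine (add_le_add hb1 hb2).trans ?_
    set u : ℝ := (1 - q)⁻¹ with hu_def
    have h1q : (0:ℝ) < 1 - q := by linarith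
    have hu : (1 - q) * u = 1 := mul_inv_cancel₀ (ne_of_gt h1q)
    have hupos : 0 < u := inv_pos.mpr h1q
    have hqu : q * u ≤ (1 / 300) * u := mul_le_mul_of_nonneg_right hq300 hupos.le
    have hmain : u + q * u ≤ 1.01 := by nlinarith
    nlinarith [mul_le_mul_of_nonneg_left hmain hc.le]
  exact ⟨hlower, hupper⟩

end
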